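/- arXiv:1709.01273 — 2 statements merged into one kernel-verified Lean document; each statement's English description precedes it below -/
import Mathlib

section
/- (Incremental cyclo-passivity of the power network) Let n ≥ 1, let G be a simple graph on {1,…,n} with neighbor sets N_i, X_{di} > X'_{di}, B_{ij} = B_{ji} < 0 for adjacent i ≠ j (B_{ij} = 0 otherwise), B_{ii} = Σ_{j∈N_i} B_{ij}, and T_{pi} > 0, K_{pi} > 0, T_{Vi} > 0, Ē_{fi} ∈ ℝ, P_{di} ∈ ℝ for all i. Let I ⊆ ℝ be an open interval, let δ, f, V : I → ℝ^n be differentiable and P_t : I → ℝ^n be continuous, satisfying for all t ∈ I and all i: δ̇_i = f_i; T_{pi} ḟ_i = −f_i + K_{pi}(P_{ti} − P_{di} + Σ_{j∈N_i} V_i V_j B_{ij} sin(δ_i − δ_j)); T_{Vi} V̇_i = Ē_{fi} − (1 − (X_{di} − X'_{di})B_{ii})V_i − (X_{di} − X'_{di}) Σ_{j∈N_i} V_j B_{ij} cos(δ_i − δ_j). Let δ̄, V̄, P̄_t ∈ ℝ^n and f* ∈ ℝ be constants with f̄ := f*·(1,…,1) satisfying, for all i: 0 = −f̄_i + K_{pi}(P̄_{ti}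 − P_{di} + Σ_{j∈N_i} V̄_i V̄_j B_{ij} sin(δ̄_i − δ̄_j)) and 0 = Ē_{fi} − (1 − (X_{di} − X'_{di})B_{ii})V̄_i − (X_{di} − X'_{di}) Σ_{j∈N_i} V̄_j B_{ij} cos(δ̄_i − δ̄_j). Then the function t ↦ 𝒮₁(δ(t), f(t), V(t)) is differentiable on I with derivative equal to −Σ_i (f_i(t) − f̄_i)²/K_{pi} − Σ_i (T_{Vi}/(X_{di} − X'_{di})) V̇_i(t)² + Σ_i (f_i(t) − f̄_i)(P_{ti}(t) − P̄_{ti}). -/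
open Finset

/-- The matrix `E(δ)`: `E i i = 1/(Xd i - Xd' i) - B i i`,
`E i j = B i j * cos (δ i - δ j)` for `i ≠ j` (which is `0` for non-adjacent pairs,
since there `B i j = 0`). -/
noncomputable def Emat (n : ℕ) (B : Fin n → Fin n → ℝ) (Xd Xd' : Fin n → ℝ)
    (δ : Fin n → ℝ) (i j : Fin n) : ℝ :=
  if i = j then 1 / (Xd i - Xd' i) - B i i else B i j * Real.cos (δ i - δ j)

/-- The incremental storage function `𝒮₁(δ, f, V)` at the reference point `(δ̄, f̄, V̄)`.
The sum over the unordered edges `{i,j} ∈ E(G)` (each edge counted once) is written as half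
the double sum over ordered adjacent pairs, the summand being symmetric in `i` and `j`
when `B` is symmetric. -/
noncomputable def storage1 (n : ℕ) (G : SimpleGraph (Fin n)) [DecidableRel G.Adj]
    (B : Fin n → Fin n → ℝ) (Xd Xd' Tp Kp : Fin n → ℝ)
    (δbar fbar Vbar δ f V : Fin n → ℝ) : ℝ :=
  (1 / 2) * ∑ i, (Tp i / Kp i) * (f i - fbar i) ^ 2
    + (1 / 2) * ∑ i, ∑ j, V i * Emat n B Xd Xd' δ i j * V j
    - (1 / 2) * ∑ i, ∑ j, Vbar i * Emat n B Xd Xd' δbar i j * Vbar j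
    - ∑ i, (∑ j, Emat n B Xd Xd' δbar i j * Vbar j) * (V i - Vbar i)
    + (1 / 2) * ∑ i, ∑ j ∈ G.neighborFinset i,
        B i j * Vbar i * Vbar j * Real.sin (δbar i - δbar j) *
          ((δ i - δ j) - (δbar i - δbar j))

/-!
Along a trajectory, the derivative of `𝒮₁` splits into a kinetic part
`∑ (Tp/Kp)(f - f̄) ḟ`, a voltage part `V̇ᵀ (E(δ) V - E(δ̄) V̄)`, and a part
`-½ ∑_{i,j} (P_ij - P̄_ij)(f_i - f_j)` from the angle dependence of `E(δ)` and of the linear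
term, where `P_ij = V_i V_j B_ij sin (δ_i - δ_j)` are the line flows. The flux-decay equation
reads `(Xd - Xd')(E(δ) V)_i = Ē_f - T_V V̇_i`, and the steady state is the same with `V̇ = 0`,
so the voltage part is `-∑ (T_V/(Xd - Xd')) V̇²`. The swing equation turns the kinetic part into
the damping and supply terms plus `∑_i (f_i - f*) ∑_j (P_ij - P̄_ij)`, which cancels the flow
part because `P - P̄` is antisymmetric.
-/

theorem SimpleGraph.sum_neighborFinset_eq_sum_erase {V M : Type*} [Fintype V] [DecidableEq V]
    [AddCommMonoid M] (G : SimpleGraph V) [DecidableRel G.Adj] (i : V) (g : V → M)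
    (hg : ∀ j, j ≠ i → ¬ G.Adj i j → g j = 0) :
    ∑ j ∈ G.neighborFinset i, g j = ∑ j ∈ univ.erase i, g j := by
  refine sum_subset (fun j hj => mem_erase.mpr ⟨?_, mem_univ j⟩) fun j hj hjN => ?_
  · exact (G.ne_of_adj ((G.mem_neighborFinset i j).mp hj)).symm
  · exact hg j (ne_of_mem_erase hj) (by simpa using hjN)

theorem SimpleGraph.sum_neighborFinset_eq_sum {V M : Type*} [Fintype V] [DecidableEq V]
    [AddCommMonoid M] (G : SimpleGraph V) [DecidableRel G.Adj] (i : V) (g : V → M)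
    (hgi : g i = 0) (hg : ∀ j, j ≠ i → ¬ G.Adj i j → g j = 0) :
    ∑ j ∈ G.neighborFinset i, g j = ∑ j, g j := by
  rw [G.sum_neighborFinset_eq_sum_erase i g hg, sum_erase _ hgi]

theorem symm_of_adj_symm {V α : Type*} [Zero α] {G : SimpleGraph V} {B : V → V → α}
    (hBsym : ∀ i j, G.Adj i j → B i j = B j i)
    (hBzero : ∀ i j, i ≠ j → ¬ G.Adj i j → B i j = 0) (i j : V) : B i j = B j i := by
  rcases eq_or_ne i j with rfl | hij
  · rfl
  by_cases hadj : G.Adj i j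
  · exact hBsym i j hadj
  · rw [hBzero i j hij hadj, hBzero j i hij.symm fun h => hadj h.symm]

theorem sum_sub_mul_sum_of_antisymm {ι K : Type*} [Fintype ι] [Field K] [CharZero K]
    (M : ι → ι → K) (hM : ∀ i j, M j i = -M i j) (F : ι → K) (c : K) :
    ∑ i, (F i - c) * ∑ j, M i j = (1 / 2) * ∑ i, ∑ j, M i j * (F i - F j) := by
  have hswap : ∀ F : ι → K, ∑ i, ∑ j, M i j * F j = -∑ i, ∑ j, M i j * F i := by
    intro F
    rw [sum_comm, ← sum_neg_distrib]
    exact sum_congr rfl fun i _ => by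
      rw [← sum_neg_distrib]
      exact sum_congr rfl fun j _ => by rw [hM]; ring
  have hzero : ∑ i, ∑ j, M i j = 0 := by
    have := hswap 1
    simp only [Pi.one_apply, mul_one] at this
    linear_combination this / 2
  have hsplit : ∑ i, ∑ j, M i j * (F i - F j)
      = ∑ i, ∑ j, M i j * F i - ∑ i, ∑ j, M i j * F j := by
    simp only [mul_sub, sum_sub_distrib]
  have hexpand :
      ∑ i, (F i - c) * ∑ j, M i j = ∑ i, ∑ j, M i j * F i - c * ∑ i, ∑ j, M i j := by
    simp only [mul_sum, ← sum_sub_distrib]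
    exact sum_congr rfl fun i _ => sum_congr rfl fun j _ => by ring
  rw [hexpand, hsplit, hswap F, hzero]
  ring

theorem hasDerivAt_sum_sum_mul_mul {ι 𝕜 : Type*} [Fintype ι] [NontriviallyNormedField 𝕜]
    {M : 𝕜 → ι → ι → 𝕜} {M' : ι → ι → 𝕜} {V : 𝕜 → ι → 𝕜} {V' : ι → 𝕜} {t : 𝕜}
    (hM : ∀ i j, HasDerivAt (fun s => M s i j) (M' i j) t)
    (hV : ∀ i, HasDerivAt (fun s => V s i) (V' i) t) (hsymm : ∀ i j, M t i j = M t j i) :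
    HasDerivAt (fun s => ∑ i, ∑ j, V s i * M s i j * V s j)
      (2 * ∑ i, V' i * ∑ j, M t i j * V t j + ∑ i, ∑ j, V t i * M' i j * V t j) t := by
  refine (HasDerivAt.fun_sum fun i _ => HasDerivAt.fun_sum fun j _ =>
    ((hV i).fun_mul (hM i j)).fun_mul (hV j)).congr_deriv ?_
  have hswap : ∑ i, ∑ j, V t i * M t i j * V' j = ∑ i, V' i * ∑ j, M t i j * V t j := by
    rw [sum_comm]
    simp only [mul_sum, hsymm]
    exact sum_congr rfl fun _ _ => sum_congr rfl fun _ _ => by ring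
  have hrow : ∑ i, ∑ j, V' i * M t i j * V t j = ∑ i, V' i * ∑ j, M t i j * V t j := by
    simp only [mul_sum, mul_assoc]
  simp only [add_mul, sum_add_distrib, hswap, hrow]
  ring

noncomputable def powerFlow {ι : Type*} (B : ι → ι → ℝ) (V δ : ι → ℝ) (i j : ι) : ℝ :=
  V i * V j * B i j * Real.sin (δ i - δ j)

theorem powerFlow_antisymm {ι : Type*} {B : ι → ι → ℝ} (hB : ∀ i j, B i j = B j i)
    (V δ : ι → ℝ) (i j : ι) : powerFlow B V δ j i = -powerFlow B V δ i j := by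
  rw [powerFlow, powerFlow, hB, ← neg_sub, Real.sin_neg]
  ring

section PowerNetwork

variable {n : ℕ} {G : SimpleGraph (Fin n)} [DecidableRel G.Adj] {B : Fin n → Fin n → ℝ}
  {Xd Xd' : Fin n → ℝ}

theorem Emat_symm (hB : ∀ i j, B i j = B j i) (δ : Fin n → ℝ) (i j : Fin n) :
    Emat n B Xd Xd' δ i j = Emat n B Xd Xd' δ j i := by
  rcases eq_or_ne i j with rfl | hij
  · rfl
  rw [Emat, Emat, if_neg hij, if_neg hij.symm, hB, ← neg_sub, Real.cos_neg]

/-- On the diagonal `E(δ)` is constant, which the formula covers since `sin 0 = 0`. -/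
theorem hasDerivAt_Emat {δ : ℝ → Fin n → ℝ} {f : Fin n → ℝ} {t : ℝ}
    (hδ : ∀ i, HasDerivAt (fun s => δ s i) (f i) t) (i j : Fin n) :
    HasDerivAt (fun s => Emat n B Xd Xd' (δ s) i j)
      (-(B i j * Real.sin (δ t i - δ t j)) * (f i - f j)) t := by
  rcases eq_or_ne i j with rfl | hij
  · simpa [Emat] using hasDerivAt_const t (1 / (Xd i - Xd' i) - B i i)
  simp only [Emat, if_neg hij]
  exact (((hδ i).fun_sub (hδ j)).cos.const_mul (B i j)).congr_deriv (by ring)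

theorem sum_Emat_mul (hBzero : ∀ i j, i ≠ j → ¬ G.Adj i j → B i j = 0)
    (δ W : Fin n → ℝ) (i : Fin n) :
    ∑ j, Emat n B Xd Xd' δ i j * W j = W i / (Xd i - Xd' i) - B i i * W i
      + ∑ j ∈ G.neighborFinset i, W j * B i j * Real.cos (δ i - δ j) := by
  rw [← add_sum_erase _ _ (mem_univ i), G.sum_neighborFinset_eq_sum_erase i _
    fun j hji hadj => by rw [hBzero i j hji.symm hadj]; ring]
  rw [Emat, if_pos rfl]
  have hoff : ∀ j ∈ univ.erase i, Emat n B Xd Xd' δ i j * W j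
      = W j * B i j * Real.cos (δ i - δ j) := fun j hj => by
    rw [Emat, if_neg (ne_of_mem_erase hj).symm]; ring
  rw [sum_congr rfl hoff]
  ring

theorem sum_neighborFinset_powerFlow (hBzero : ∀ i j, i ≠ j → ¬ G.Adj i j → B i j = 0)
    (V δ : Fin n → ℝ) (i : Fin n) :
    ∑ j ∈ G.neighborFinset i, V i * V j * B i j * Real.sin (δ i - δ j)
      = ∑ j, powerFlow B V δ i j :=
  G.sum_neighborFinset_eq_sum i _ (by simp)
    fun j hji hadj => by rw [hBzero i j hji.symm hadj]; ring

theorem hasDerivAt_storage1 (hB : ∀ i j, B i j = B j i)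
    (hBzero : ∀ i j, i ≠ j → ¬ G.Adj i j → B i j = 0) (Tp Kp δbar fbar Vbar : Fin n → ℝ)
    {δ f V : ℝ → Fin n → ℝ} {f' V' : Fin n → ℝ} {t : ℝ}
    (hδ : ∀ i, HasDerivAt (fun s => δ s i) (f t i) t)
    (hf : ∀ i, HasDerivAt (fun s => f s i) (f' i) t)
    (hV : ∀ i, HasDerivAt (fun s => V s i) (V' i) t) :
    HasDerivAt (fun s => storage1 n G B Xd Xd' Tp Kp δbar fbar Vbar (δ s) (f s) (V s))
      (∑ i, Tp i / Kp i * (f t i - fbar i) * f' i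
        + ∑ i, V' i * (∑ j, Emat n B Xd Xd' (δ t) i j * V t j
            - ∑ j, Emat n B Xd Xd' δbar i j * Vbar j)
        - (1 / 2) * ∑ i, ∑ j,
            (powerFlow B (V t) (δ t) i j - powerFlow B Vbar δbar i j) * (f t i - f t j)) t := by
  have hkin : HasDerivAt (fun s => ∑ i, Tp i / Kp i * (f s i - fbar i) ^ 2)
      (2 * ∑ i, Tp i / Kp i * (f t i - fbar i) * f' i) t := by
    refine (HasDerivAt.fun_sum fun i _ =>
      (((hf i).sub_const (fbar i)).fun_pow 2).const_mul (Tp i / Kp i)).congr_deriv ?_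
    rw [mul_sum]
    exact sum_congr rfl fun i _ => by ring
  have hquad := hasDerivAt_sum_sum_mul_mul (hasDerivAt_Emat (B := B) (Xd := Xd) (Xd' := Xd') hδ)
    hV (Emat_symm hB (δ t))
  have hlin : HasDerivAt
      (fun s => ∑ i, (∑ j, Emat n B Xd Xd' δbar i j * Vbar j) * (V s i - Vbar i))
      (∑ i, (∑ j, Emat n B Xd Xd' δbar i j * Vbar j) * V' i) t :=
    HasDerivAt.fun_sum fun i _ => ((hV i).sub_const (Vbar i)).const_mul _
  have hangle : HasDerivAt
      (fun s => ∑ i, ∑ j ∈ G.neighborFinset i, B i j * Vbar i * Vbar j *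
        Real.sin (δbar i - δbar j) * ((δ s i - δ s j) - (δbar i - δbar j)))
      (∑ i, ∑ j, powerFlow B Vbar δbar i j * (f t i - f t j)) t := by
    refine (HasDerivAt.fun_sum fun i _ => HasDerivAt.fun_sum fun j _ =>
      (((hδ i).fun_sub (hδ j)).sub_const _).const_mul _).congr_deriv (sum_congr rfl fun i _ => ?_)
    rw [G.sum_neighborFinset_eq_sum i _ (by simp)
      fun j hji hadj => by rw [hBzero i j hji.symm hadj]; ring]
    exact sum_congr rfl fun j _ => by rw [powerFlow]; ring
  have hflow : ∑ i, ∑ j, V t i * (-(B i j * Real.sin (δ t i - δ t j)) * (f t i - f t j)) * V t j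
      = -∑ i, ∑ j, powerFlow B (V t) (δ t) i j * (f t i - f t j) := by
    simp only [← sum_neg_distrib]
    exact sum_congr rfl fun i _ => sum_congr rfl fun j _ => by rw [powerFlow]; ring
  have hsplit : ∑ i, ∑ j,
        (powerFlow B (V t) (δ t) i j - powerFlow B Vbar δbar i j) * (f t i - f t j)
      = ∑ i, ∑ j, powerFlow B (V t) (δ t) i j * (f t i - f t j)
        - ∑ i, ∑ j, powerFlow B Vbar δbar i j * (f t i - f t j) := by
    simp only [sub_mul, sum_sub_distrib]
  have hvolt : ∑ i, V' i * (∑ j, Emat n B Xd Xd' (δ t) i j * V t j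
        - ∑ j, Emat n B Xd Xd' δbar i j * Vbar j)
      = ∑ i, V' i * ∑ j, Emat n B Xd Xd' (δ t) i j * V t j
        - ∑ i, (∑ j, Emat n B Xd Xd' δbar i j * Vbar j) * V' i := by
    rw [← sum_sub_distrib]
    exact sum_congr rfl fun i _ => by ring
  refine ((((hkin.const_mul (1 / 2)).add (hquad.const_mul (1 / 2))).sub_const _).sub hlin
    |>.add (hangle.const_mul (1 / 2))).congr_deriv ?_
  rw [hflow, hsplit, hvolt]
  ring

theorem swing_balance (hBzero : ∀ i j, i ≠ j → ¬ G.Adj i j → B i j = 0)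
    {Tp Kp Pd Pt Ptbar F F' W D δbar Vbar : Fin n → ℝ} {fstar : ℝ} {i : Fin n}
    (hKp : Kp i ≠ 0)
    (hswing : Tp i * F' i = -F i + Kp i * (Pt i - Pd i +
      ∑ j ∈ G.neighborFinset i, W i * W j * B i j * Real.sin (D i - D j)))
    (hsteady : 0 = -fstar + Kp i * (Ptbar i - Pd i +
      ∑ j ∈ G.neighborFinset i, Vbar i * Vbar j * B i j * Real.sin (δbar i - δbar j))) :
    Tp i / Kp i * (F i - fstar) * F' i
      = -((F i - fstar) ^ 2 / Kp i) + (F i - fstar) * (Pt i - Ptbar i)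
        + (F i - fstar) * ∑ j, (powerFlow B W D i j - powerFlow B Vbar δbar i j) := by
  rw [sum_neighborFinset_powerFlow hBzero] at hswing hsteady
  rw [sum_sub_distrib]
  field_simp
  linear_combination (F i - fstar) * hswing - (F i - fstar) * hsteady

theorem flux_decay_balance (hBzero : ∀ i j, i ≠ j → ¬ G.Adj i j → B i j = 0)
    {TV Ef W W' D δbar Vbar : Fin n → ℝ} {i : Fin n} (hX : Xd' i < Xd i)
    (hflux : TV i * W' i = Ef i - (1 - (Xd i - Xd' i) * B i i) * W i -
      (Xd i - Xd' i) * ∑ j ∈ G.neighborFinset i, W j * B i j * Real.cos (D i - D j))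
    (hsteady : 0 = Ef i - (1 - (Xd i - Xd' i) * B i i) * Vbar i -
      (Xd i - Xd' i) * ∑ j ∈ G.neighborFinset i, Vbar j * B i j * Real.cos (δbar i - δbar j)) :
    W' i * (∑ j, Emat n B Xd Xd' D i j * W j - ∑ j, Emat n B Xd Xd' δbar i j * Vbar j)
      = -(TV i / (Xd i - Xd' i) * W' i ^ 2) := by
  have hc : Xd i - Xd' i ≠ 0 := (sub_pos.mpr hX).ne'
  rw [sum_Emat_mul hBzero, sum_Emat_mul hBzero]
  field_simp
  linear_combination W' i * hflux - W' i * hsteady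

end PowerNetwork

theorem stmt6_general (n : ℕ) (G : SimpleGraph (Fin n)) [DecidableRel G.Adj]
    (Xd Xd' : Fin n → ℝ) (hX : ∀ i, Xd' i < Xd i)
    (B : Fin n → Fin n → ℝ)
    (hBsym : ∀ i j, G.Adj i j → B i j = B j i)
    (hBzero : ∀ i j, i ≠ j → ¬ G.Adj i j → B i j = 0)
    (Tp Kp TV Ef Pd : Fin n → ℝ)
    (hKp : ∀ i, 0 < Kp i)
    (a b : ℝ)
    (δ f V f' V' : ℝ → Fin n → ℝ) (Pt : ℝ → Fin n → ℝ)
    (hδ : ∀ t ∈ Set.Ioo a b, ∀ i, HasDerivAt (fun s => δ s i) (f t i) t)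
    (hf : ∀ t ∈ Set.Ioo a b, ∀ i, HasDerivAt (fun s => f s i) (f' t i) t)
    (hfode : ∀ t ∈ Set.Ioo a b, ∀ i, Tp i * f' t i =
      -f t i + Kp i * (Pt t i - Pd i +
        ∑ j ∈ G.neighborFinset i, V t i * V t j * B i j * Real.sin (δ t i - δ t j)))
    (hV : ∀ t ∈ Set.Ioo a b, ∀ i, HasDerivAt (fun s => V s i) (V' t i) t)
    (hVode : ∀ t ∈ Set.Ioo a b, ∀ i, TV i * V' t i =
      Ef i - (1 - (Xd i - Xd' i) * B i i) * V t i -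
        (Xd i - Xd' i) * ∑ j ∈ G.neighborFinset i, V t j * B i j * Real.cos (δ t i - δ t j))
    (δbar Vbar Ptbar : Fin n → ℝ) (fstar : ℝ)
    (hss2 : ∀ i, 0 = -fstar + Kp i * (Ptbar i - Pd i +
      ∑ j ∈ G.neighborFinset i, Vbar i * Vbar j * B i j * Real.sin (δbar i - δbar j)))
    (hss3 : ∀ i, 0 = Ef i - (1 - (Xd i - Xd' i) * B i i) * Vbar i -
      (Xd i - Xd' i) * ∑ j ∈ G.neighborFinset i,
        Vbar j * B i j * Real.cos (δbar i - δbar j)) :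
    ∀ t ∈ Set.Ioo a b,
      HasDerivAt
        (fun s => storage1 n G B Xd Xd' Tp Kp δbar (fun _ => fstar) Vbar (δ s) (f s) (V s))
        (-∑ i, (f t i - fstar) ^ 2 / Kp i
          - ∑ i, (TV i / (Xd i - Xd' i)) * (V' t i) ^ 2
          + ∑ i, (f t i - fstar) * (Pt t i - Ptbar i)) t := by
  intro t ht
  have hB := symm_of_adj_symm hBsym hBzero
  refine (hasDerivAt_storage1 hB hBzero Tp Kp δbar _ Vbar (hδ t ht) (hf t ht)
    (hV t ht)).congr_deriv ?_
  have hflows := sum_sub_mul_sum_of_antisymm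
    (fun i j => powerFlow B (V t) (δ t) i j - powerFlow B Vbar δbar i j)
    (fun i j => by rw [powerFlow_antisymm hB (V t), powerFlow_antisymm hB Vbar]; ring) (f t) fstar
  rw [sum_congr rfl fun i _ => swing_balance hBzero (hKp i).ne' (hfode t ht i) (hss2 i),
    sum_congr rfl fun i _ => flux_decay_balance hBzero (hX i) (hVode t ht i) (hss3 i)]
  simp only [sum_add_distrib, sum_neg_distrib]
  linarith

/-- Incremental cyclo-passivity of the power network: along any solution of
the flux-decay model of the lossless power network on the open interval `(a, b)`, and for
any steady state `(δ̄, f̄ = f*·𝟙, V̄, P̄t)`, the function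
`t ↦ 𝒮₁(δ(t), f(t), V(t))` is differentiable with derivative
`-∑ i (f i - f*)²/Kp i - ∑ i (TV i/(Xd i - Xd' i)) V̇ i² + ∑ i (f i - f*)(Pt i - P̄t i)`. -/
theorem stmt6 (n : ℕ) (hn : 1 ≤ n) (G : SimpleGraph (Fin n)) [DecidableRel G.Adj]
    (Xd Xd' : Fin n → ℝ) (hX : ∀ i, Xd' i < Xd i)
    (B : Fin n → Fin n → ℝ)
    (hBsym : ∀ i j, G.Adj i j → B i j = B j i)
    (hBneg : ∀ i j, G.Adj i j → B i j < 0)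
    (hBzero : ∀ i j, i ≠ j → ¬ G.Adj i j → B i j = 0)
    (hBii : ∀ i, B i i = ∑ j ∈ G.neighborFinset i, B i j)
    (Tp Kp TV Ef Pd : Fin n → ℝ)
    (hTp : ∀ i, 0 < Tp i) (hKp : ∀ i, 0 < Kp i) (hTV : ∀ i, 0 < TV i)
    (a b : ℝ)
    (δ f V f' V' : ℝ → Fin n → ℝ) (Pt : ℝ → Fin n → ℝ)
    (hPtcont : ∀ i, ContinuousOn (fun t => Pt t i) (Set.Ioo a b))
    (hδ : ∀ t ∈ Set.Ioo a b, ∀ i, HasDerivAt (fun s => δ s i) (f t i) t)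
    (hf : ∀ t ∈ Set.Ioo a b, ∀ i, HasDerivAt (fun s => f s i) (f' t i) t)
    (hfode : ∀ t ∈ Set.Ioo a b, ∀ i, Tp i * f' t i =
      -f t i + Kp i * (Pt t i - Pd i +
        ∑ j ∈ G.neighborFinset i, V t i * V t j * B i j * Real.sin (δ t i - δ t j)))
    (hV : ∀ t ∈ Set.Ioo a b, ∀ i, HasDerivAt (fun s => V s i) (V' t i) t)
    (hVode : ∀ t ∈ Set.Ioo a b, ∀ i, TV i * V' t i =
      Ef i - (1 - (Xd i - Xd' i) * B i i) * V t i -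
        (Xd i - Xd' i) * ∑ j ∈ G.neighborFinset i, V t j * B i j * Real.cos (δ t i - δ t j))
    (δbar Vbar Ptbar : Fin n → ℝ) (fstar : ℝ)
    (hss2 : ∀ i, 0 = -fstar + Kp i * (Ptbar i - Pd i +
      ∑ j ∈ G.neighborFinset i, Vbar i * Vbar j * B i j * Real.sin (δbar i - δbar j)))
    (hss3 : ∀ i, 0 = Ef i - (1 - (Xd i - Xd' i) * B i i) * Vbar i -
      (Xd i - Xd' i) * ∑ j ∈ G.neighborFinset i,
        Vbar j * B i j * Real.cos (δbar i - δbar j)) :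
    ∀ t ∈ Set.Ioo a b,
      HasDerivAt
        (fun s => storage1 n G B Xd Xd' Tp Kp δbar (fun _ => fstar) Vbar (δ s) (f s) (V s))
        (-∑ i, (f t i - fstar) ^ 2 / Kp i
          - ∑ i, (TV i / (Xd i - Xd' i)) * (V' t i) ^ 2
          + ∑ i, (f t i - fstar) * (Pt t i - Ptbar i)) t :=
  stmt6_general n G Xd Xd' hX B hBsym hBzero Tp Kp TV Ef Pd hKp a b δ f V f' V' Pt hδ hf hfode hV
    hVode δbar Vbar Ptbar fstar hss2 hss3
end

section
/- (Storage identity for the primal-dual based scheme) Let n, m ≥ 1, B ∈ ℝ^{n×m}, and for each i let M_{1i} > 0, M_{2i} ≥ 0, M_{3i} > 0, M_{4i} = −(M_{2i}+M_{3i}), T_{ti} > 0, T_{θi} > 0, and let P_d ∈ ℝ^n. Let C : ℝ^n → ℝ be differentiable with gradient ∇C. Let I ⊆ ℝ be an open interval, f : I → ℝ^n continuous, and P, θ, λ : I → ℝ^n, v : I → ℝ^m differentiable, satisfying for all t ∈ I: M_{3i}T_{ti}Ṗ_i = −(M_{2i}+M_{3i})P_i − M_{4i}θ_i − M_{1i}f_i;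 T_{θi}θ̇_i = −θ_i + P_i − (M_{1i}/(M_{2i}+M_{3i}))((∇C(θ))_i − λ_i); v̇ = −Bᵀλ; λ̇ = Bv − θ + P_d. Let P̄, θ̄, λ̄ ∈ ℝ^n and v̄ ∈ ℝ^m be constants with P̄ = θ̄, 0 = −θ̄_i + P̄_i − (M_{1i}/(M_{2i}+M_{3i}))((∇C(θ̄))_i − λ̄_i) for all i, Bᵀλ̄ = 0, and Bv̄ − θ̄ + P_d = 0. Then the function t ↦ S₂(t) + S₃(t), where S₂(t) = ½Σ_i(M_{3i}T_{ti}/M_{1i})(P_i − P̄_i)² + ½Σ_i((M_{2i}+M_{3i})T_{θi}/M_{1i})(θ_i − θ̄_i)² and S₃(t) = ½‖v(t) − v̄‖² + ½‖λ(t) − λ̄‖², is differentiable on I with derivative equal to −Σ_i((M_{2i}+M_{3i})/M_{1i})(P_i − θ_i)² − (θ − θ̄)ᵀ(∇C(θ) − ∇C(θ̄)) − Σ_i(P_i − P̄_i)f_i. -/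
open Finset

/-!
Differentiating the storage term by term and substituting the dynamics, the turbine/controller
part `S₂` produces, besides the dissipation and supply terms, the cross term
`(θ - θ̄)ᵀ(λ - λ̄)`, while the primal-dual part `S₃` produces `-(θ - θ̄)ᵀ(λ - λ̄)` once the
skew-symmetric flow `(v̇, λ̇) = (-Bᵀ(λ - λ̄), B(v - v̄) - (θ - θ̄))` around the steady state is
used. The cross terms cancel, and the steady state gives `∇C(θ̄) = λ̄`.
-/

section Storage

variable {ι : Type*} [Fintype ι]

theorem hasDerivAt_half_sum_mul_sq_sub (w xbar x' : ι → ℝ) (x : ℝ → ι → ℝ) {t : ℝ}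
    (hx : ∀ i, HasDerivAt (fun s => x s i) (x' i) t) :
    HasDerivAt (fun s => (1 / 2) * ∑ i, w i * (x s i - xbar i) ^ 2)
      (∑ i, w i * (x t i - xbar i) * x' i) t := by
  have hsum := HasDerivAt.fun_sum (u := univ) fun i _ =>
    (((hx i).sub_const (xbar i)).pow 2).const_mul (w i)
  refine (hsum.const_mul (1 / 2 : ℝ)).congr_deriv ?_
  rw [mul_sum]
  refine sum_congr rfl fun i _ => ?_
  push_cast
  ring

theorem hasDerivAt_half_sum_sq_sub (xbar x' : ι → ℝ) (x : ℝ → ι → ℝ) {t : ℝ}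
    (hx : ∀ i, HasDerivAt (fun s => x s i) (x' i) t) :
    HasDerivAt (fun s => (1 / 2) * ∑ i, (x s i - xbar i) ^ 2)
      (∑ i, (x t i - xbar i) * x' i) t := by
  simpa only [one_mul] using hasDerivAt_half_sum_mul_sq_sub (fun _ => 1) xbar x' x hx

end Storage

section PrimalDual

variable {ι κ : Type*} [Fintype ι] [Fintype κ]

theorem sum_mul_sum_transpose (B : ι → κ → ℝ) (x : κ → ℝ) (y : ι → ℝ) :
    ∑ k, x k * ∑ i, B i k * y i = ∑ i, y i * ∑ k, B i k * x k := by
  simp_rw [mul_sum]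
  rw [sum_comm]
  exact sum_congr rfl fun i _ => sum_congr rfl fun k _ => by ring

theorem primalDual_storage_rate (B : ι → κ → ℝ) (v vbar v' : κ → ℝ)
    (lam lambar lam' θ θbar Pd : ι → ℝ)
    (hv' : ∀ k, v' k = -∑ i, B i k * lam i)
    (hlam' : ∀ i, lam' i = ∑ k, B i k * v k - θ i + Pd i)
    (hlambar : ∀ k, ∑ i, B i k * lambar i = 0)
    (hvbar : ∀ i, ∑ k, B i k * vbar k - θbar i + Pd i = 0) :
    ∑ k, (v k - vbar k) * v' k + ∑ i, (lam i - lambar i) * lam' i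
      = -∑ i, (lam i - lambar i) * (θ i - θbar i) := by
  have hv'_shift : ∀ k, v' k = -∑ i, B i k * (lam i - lambar i) := fun k => by
    simp only [mul_sub, sum_sub_distrib, hlambar k, sub_zero, hv' k]
  have hlam'_shift : ∀ i, lam' i = ∑ k, B i k * (v k - vbar k) - (θ i - θbar i) := fun i => by
    simp only [mul_sub, sum_sub_distrib, hlam' i]
    linear_combination hvbar i
  calc ∑ k, (v k - vbar k) * v' k + ∑ i, (lam i - lambar i) * lam' i
      = -∑ k, (v k - vbar k) * ∑ i, B i k * (lam i - lambar i)
          + ∑ i, (lam i - lambar i) * (∑ k, B i k * (v k - vbar k) - (θ i - θbar i)) := by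
        simp only [hv'_shift, hlam'_shift, mul_neg, sum_neg_distrib]
    _ = -∑ i, (lam i - lambar i) * (θ i - θbar i) := by
        rw [sum_mul_sum_transpose]
        simp only [mul_sub, sum_sub_distrib]
        ring

end PrimalDual

theorem gradient_eq_of_steadyState {M1 M2 M3 Pbar θbar gbar lambar : ℝ}
    (hM1 : M1 ≠ 0) (hM23 : M2 + M3 ≠ 0) (hPbar : Pbar = θbar)
    (hθbar : 0 = -θbar + Pbar - (M1 / (M2 + M3)) * (gbar - lambar)) :
    gbar = lambar := by
  rw [hPbar, neg_add_cancel, zero_sub, zero_eq_neg, mul_eq_zero, sub_eq_zero] at hθbar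
  exact hθbar.resolve_left (div_ne_zero hM1 hM23)

theorem turbineController_storage_rate
    {M1 M2 M3 M4 Tt Tθ P P' θ θ' f g lam Pbar θbar gbar lambar : ℝ}
    (hM1 : M1 ≠ 0) (hM23 : M2 + M3 ≠ 0) (hM4 : M4 = -(M2 + M3))
    (hPode : M3 * Tt * P' = -(M2 + M3) * P - M4 * θ - M1 * f)
    (hθode : Tθ * θ' = -θ + P - (M1 / (M2 + M3)) * (g - lam))
    (hPbar : Pbar = θbar) (hgbar : gbar = lambar) :
    M3 * Tt / M1 * (P - Pbar) * P' + (M2 + M3) * Tθ / M1 * (θ - θbar) * θ'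
        - (lam - lambar) * (θ - θbar)
      = -((M2 + M3) / M1 * (P - θ) ^ 2) - (θ - θbar) * (g - gbar) - (P - Pbar) * f := by
  subst hM4 hPbar hgbar
  linear_combination (norm := skip)
    (P - Pbar) / M1 * hPode + (M2 + M3) / M1 * (θ - Pbar) * hθode
  field_simp
  ring

theorem stmt10_general (n m : ℕ)
    (B : Fin n → Fin m → ℝ)
    (M1 M2 M3 M4 Tt Tθ : Fin n → ℝ)
    (hM1 : ∀ i, 0 < M1 i) (hM2 : ∀ i, 0 ≤ M2 i) (hM3 : ∀ i, 0 < M3 i)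
    (hM4 : ∀ i, M4 i = -(M2 i + M3 i))
    (Pd : Fin n → ℝ)
    (gradC : (Fin n → ℝ) → Fin n → ℝ)
    (a b : ℝ) (f P θ lamv P' θ' lam' : ℝ → Fin n → ℝ) (v v' : ℝ → Fin m → ℝ)
    (hP : ∀ t ∈ Set.Ioo a b, ∀ i, HasDerivAt (fun s => P s i) (P' t i) t)
    (hθ : ∀ t ∈ Set.Ioo a b, ∀ i, HasDerivAt (fun s => θ s i) (θ' t i) t)
    (hlam : ∀ t ∈ Set.Ioo a b, ∀ i, HasDerivAt (fun s => lamv s i) (lam' t i) t)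
    (hv : ∀ t ∈ Set.Ioo a b, ∀ k, HasDerivAt (fun s => v s k) (v' t k) t)
    (hPode : ∀ t ∈ Set.Ioo a b, ∀ i, M3 i * Tt i * P' t i =
      -(M2 i + M3 i) * P t i - M4 i * θ t i - M1 i * f t i)
    (hθode : ∀ t ∈ Set.Ioo a b, ∀ i, Tθ i * θ' t i =
      -θ t i + P t i - (M1 i / (M2 i + M3 i)) * (gradC (θ t) i - lamv t i))
    (hvode : ∀ t ∈ Set.Ioo a b, ∀ k, v' t k = -∑ i, B i k * lamv t i)
    (hlamode : ∀ t ∈ Set.Ioo a b, ∀ i, lam' t i = ∑ k, B i k * v t k - θ t i + Pd i)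
    (Pbar θbar lambar : Fin n → ℝ) (vbar : Fin m → ℝ)
    (hPbar : ∀ i, Pbar i = θbar i)
    (hθbar : ∀ i, 0 = -θbar i + Pbar i -
      (M1 i / (M2 i + M3 i)) * (gradC θbar i - lambar i))
    (hlambar : ∀ k, ∑ i, B i k * lambar i = 0)
    (hvbar : ∀ i, ∑ k, B i k * vbar k - θbar i + Pd i = 0) :
    ∀ t ∈ Set.Ioo a b,
      HasDerivAt
        (fun s => ((1 / 2) * ∑ i, (M3 i * Tt i / M1 i) * (P s i - Pbar i) ^ 2
            + (1 / 2) * ∑ i, ((M2 i + M3 i) * Tθ i / M1 i) * (θ s i - θbar i) ^ 2)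
          + ((1 / 2) * ∑ k, (v s k - vbar k) ^ 2
            + (1 / 2) * ∑ i, (lamv s i - lambar i) ^ 2))
        (-∑ i, ((M2 i + M3 i) / M1 i) * (P t i - θ t i) ^ 2
          - ∑ i, (θ t i - θbar i) * (gradC (θ t) i - gradC θbar i)
          - ∑ i, (P t i - Pbar i) * f t i) t := by
  intro t ht
  have hM1ne : ∀ i, M1 i ≠ 0 := fun i => (hM1 i).ne'
  have hM23 : ∀ i, M2 i + M3 i ≠ 0 := fun i => (add_pos_of_nonneg_of_pos (hM2 i) (hM3 i)).ne'
  have hderiv := ((hasDerivAt_half_sum_mul_sq_sub (fun i => M3 i * Tt i / M1 i) Pbar _ P (hP t ht)).add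
      (hasDerivAt_half_sum_mul_sq_sub (fun i => (M2 i + M3 i) * Tθ i / M1 i) θbar _ θ
        (hθ t ht))).add
    ((hasDerivAt_half_sum_sq_sub vbar _ v (hv t ht)).add
      (hasDerivAt_half_sum_sq_sub lambar _ lamv (hlam t ht)))
  refine hderiv.congr_deriv ?_
  rw [primalDual_storage_rate B _ _ _ _ _ _ (θ t) θbar Pd (hvode t ht) (hlamode t ht)
    hlambar hvbar, ← sub_eq_add_neg, ← sum_add_distrib, ← sum_sub_distrib]
  simp only [← sum_neg_distrib, ← sum_sub_distrib]
  exact sum_congr rfl fun i _ => turbineController_storage_rate (hM1ne i) (hM23 i) (hM4 i)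
    (hPode t ht i) (hθode t ht i) (hPbar i)
    (gradient_eq_of_steadyState (hM1ne i) (hM23 i) (hPbar i) (hθbar i))

/-- Storage identity for the primal-dual based scheme: along solutions of the
reduced turbine dynamics interconnected with the primal-dual controller
(`T_θ θ̇ = -θ + P - M1(M2+M3)⁻¹(∇C(θ) - λ)`, `v̇ = -Bᵀλ`, `λ̇ = Bv - θ + Pd`), and for a
steady state `(P̄ = θ̄, θ̄, v̄, λ̄)` with zero frequency deviation, the total storage
`S₂ + S₃` is differentiable with derivative
`-∑ i ((M2 i + M3 i)/M1 i)(P i - θ i)² - (θ - θ̄)ᵀ(∇C(θ) - ∇C(θ̄)) - ∑ i (P i - P̄ i) f i`. -/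
theorem stmt10 (n m : ℕ) (hn : 1 ≤ n) (hm : 1 ≤ m)
    (B : Fin n → Fin m → ℝ)
    (M1 M2 M3 M4 Tt Tθ : Fin n → ℝ)
    (hM1 : ∀ i, 0 < M1 i) (hM2 : ∀ i, 0 ≤ M2 i) (hM3 : ∀ i, 0 < M3 i)
    (hM4 : ∀ i, M4 i = -(M2 i + M3 i)) (hTt : ∀ i, 0 < Tt i) (hTθ : ∀ i, 0 < Tθ i)
    (Pd : Fin n → ℝ)
    (C : (Fin n → ℝ) → ℝ) (gradC : (Fin n → ℝ) → Fin n → ℝ)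
    (hC : ∀ x : Fin n → ℝ, ∃ L : (Fin n → ℝ) →L[ℝ] ℝ,
      HasFDerivAt C L x ∧ ∀ w : Fin n → ℝ, L w = ∑ i, gradC x i * w i)
    (a b : ℝ) (f P θ lamv P' θ' lam' : ℝ → Fin n → ℝ) (v v' : ℝ → Fin m → ℝ)
    (hf : ∀ i, ContinuousOn (fun t => f t i) (Set.Ioo a b))
    (hP : ∀ t ∈ Set.Ioo a b, ∀ i, HasDerivAt (fun s => P s i) (P' t i) t)
    (hθ : ∀ t ∈ Set.Ioo a b, ∀ i, HasDerivAt (fun s => θ s i) (θ' t i) t)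
    (hlam : ∀ t ∈ Set.Ioo a b, ∀ i, HasDerivAt (fun s => lamv s i) (lam' t i) t)
    (hv : ∀ t ∈ Set.Ioo a b, ∀ k, HasDerivAt (fun s => v s k) (v' t k) t)
    (hPode : ∀ t ∈ Set.Ioo a b, ∀ i, M3 i * Tt i * P' t i =
      -(M2 i + M3 i) * P t i - M4 i * θ t i - M1 i * f t i)
    (hθode : ∀ t ∈ Set.Ioo a b, ∀ i, Tθ i * θ' t i =
      -θ t i + P t i - (M1 i / (M2 i + M3 i)) * (gradC (θ t) i - lamv t i))
    (hvode : ∀ t ∈ Set.Ioo a b, ∀ k, v' t k = -∑ i, B i k * lamv t i)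
    (hlamode : ∀ t ∈ Set.Ioo a b, ∀ i, lam' t i = ∑ k, B i k * v t k - θ t i + Pd i)
    (Pbar θbar lambar : Fin n → ℝ) (vbar : Fin m → ℝ)
    (hPbar : ∀ i, Pbar i = θbar i)
    (hθbar : ∀ i, 0 = -θbar i + Pbar i -
      (M1 i / (M2 i + M3 i)) * (gradC θbar i - lambar i))
    (hlambar : ∀ k, ∑ i, B i k * lambar i = 0)
    (hvbar : ∀ i, ∑ k, B i k * vbar k - θbar i + Pd i = 0) :
    ∀ t ∈ Set.Ioo a b,
      HasDerivAt
        (fun s => ((1 / 2) * ∑ i, (M3 i * Tt i / M1 i) * (P s i - Pbar i) ^ 2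
            + (1 / 2) * ∑ i, ((M2 i + M3 i) * Tθ i / M1 i) * (θ s i - θbar i) ^ 2)
          + ((1 / 2) * ∑ k, (v s k - vbar k) ^ 2
            + (1 / 2) * ∑ i, (lamv s i - lambar i) ^ 2))
        (-∑ i, ((M2 i + M3 i) / M1 i) * (P t i - θ t i) ^ 2
          - ∑ i, (θ t i - θbar i) * (gradC (θ t) i - gradC θbar i)
          - ∑ i, (P t i - Pbar i) * f t i) t :=
  stmt10_general n m B M1 M2 M3 M4 Tt Tθ hM1 hM2 hM3 hM4 Pd gradC a b f P θ lamv P' θ' lam' v v' hP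
    hθ hlam hv hPode hθode hvode hlamode Pbar θbar lambar vbar hPbar hθbar hlambar hvbar
end
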